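/- The set Ω_r of tuples (g_1,...,g_r) ∈ F_q[T]^r with g_r ≠ 0 such that for ALL monic irreducible polynomials l ≠ T, either v_l(g_r) = 0 or v_l(g_r) ≥ p, has density 0 (its upper density is 0). -/

import Mathlib

/-!
If every monic irreducible `l ≠ T` dividing `f` divides it to a power `≥ p ≥ 2`, write
`f = c g² h` with `g, h` monic and `h` the product of the irreducible factors of odd exponent.
An exponent `e ≥ 2` has `e % 2 ≤ e / 2`, so `deg h ≤ deg g + 1`, the `1` accounting for `T`.
For `deg f < N` this gives `deg g ≤ N / 2` and `deg h ≤ N / 3 + 1`: at most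
`q ^ (N/2 + N/3 + 4)` such `f`, against `q ^ N - 1` nonzero choices of the last coordinate,
a ratio of `O(q ^ (-N/6))`.
-/

open Polynomial UniqueFactorizationMonoid Filter Topology

theorem Nat.card_subtype_pi_le {ι α : Type*} [Fintype ι] [DecidableEq ι] (i : ι)
    {Q : (ι → α) → Prop} (s t : Set α) [Finite s] [Finite t]
    (hQ : ∀ g, Q g → g i ∈ t ∧ ∀ j, g j ∈ s) :
    Nat.card {g // Q g} ≤ Nat.card t * Nat.card s ^ (Fintype.card ι - 1) := by
  let φ : {g // Q g} → t × ({j // j ≠ i} → s) :=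
    fun g => (⟨g.1 i, (hQ g.1 g.2).1⟩, fun j => ⟨g.1 j, (hQ g.1 g.2).2 j⟩)
  have hφ : φ.Injective := fun g g' h => Subtype.ext <| (Equiv.funSplitAt i α).injective <| by
    simp only [φ, Prod.mk.injEq, Subtype.mk.injEq, funext_iff] at h
    ext j <;> simp [h]
  calc _ ≤ _ := Nat.card_le_card_of_injective φ hφ
    _ = _ := by simp [Nat.card_fun]

instance Polynomial.finite_degreeLT (R : Type*) [Semiring R] [Finite R] (n : ℕ) :
    Finite (degreeLT R n) :=
  Finite.of_equiv _ (degreeLTEquiv R n).toEquiv.symm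

theorem Polynomial.card_degreeLT (R : Type*) [Semiring R] [Fintype R] (n : ℕ) :
    Nat.card (degreeLT R n) = Fintype.card R ^ n := by
  rw [Nat.card_congr (degreeLTEquiv R n).toEquiv, Nat.card_fun, Nat.card_eq_fintype_card,
    Nat.card_eq_fintype_card, Fintype.card_fin]

def Polynomial.IsPowerfulAwayFrom {R : Type*} [Semiring R] (l₀ f : R[X]) : Prop :=
  ∀ l : R[X], l.Monic → Irreducible l → l ≠ l₀ → l ∣ f → l ^ 2 ∣ f

theorem Polynomial.IsPowerfulAwayFrom.exists_C_mul_sq_mul {K : Type*} [Field K] {l₀ f : K[X]}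
    (hf : f ≠ 0) (H : IsPowerfulAwayFrom l₀ f) :
    ∃ (c : K) (g h : K[X]), f = C c * g ^ 2 * h ∧ g.Monic ∧ h.Monic ∧
      h.natDegree ≤ g.natDegree + l₀.natDegree := by
  classical
  set F := normalizedFactors f
  have hirr : ∀ l ∈ F, Irreducible l := fun l hl => irreducible_of_normalized_factor l hl
  have hmonic : ∀ l ∈ F, l.Monic := fun l hl => by
    simpa [normalize_normalized_factor l hl] using monic_normalize (hirr l hl).ne_zero
  have two_le_count : ∀ l ∈ F, l ≠ l₀ → 2 ≤ F.count l := by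
    intro l hl hl₀
    have hle : normalizedFactors (l ^ 2) ≤ F :=
      (dvd_iff_normalizedFactors_le_normalizedFactors (pow_ne_zero 2 (hirr l hl).ne_zero) hf).1
        (H l (hmonic l hl) (hirr l hl) hl₀ (dvd_of_mem_normalizedFactors hl))
    simpa [normalizedFactors_pow, normalizedFactors_irreducible (hirr l hl),
      normalize_normalized_factor l hl] using Multiset.count_le_of_le l hle
  set g := ∏ l ∈ F.toFinset, l ^ (F.count l / 2)
  set h := ∏ l ∈ F.toFinset, l ^ (F.count l % 2)
  have hpow_monic : ∀ k : K[X] → ℕ, ∀ l ∈ F.toFinset, (l ^ k l).Monic :=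
    fun k l hl => (hmonic l (Multiset.mem_toFinset.1 hl)).pow _
  have hg : g.Monic := monic_prod_of_monic _ _ (hpow_monic _)
  have hh : h.Monic := monic_prod_of_monic _ _ (hpow_monic _)
  obtain ⟨u, hu⟩ := (prod_normalizedFactors hf).symm
  obtain ⟨c, -, hc⟩ := Polynomial.isUnit_iff.1 u⁻¹.isUnit
  refine ⟨c, g, h, ?_, hg, hh, ?_⟩
  · have hF : F.prod = g ^ 2 * h := by
      rw [Finset.prod_multiset_count, ← Finset.prod_pow, ← Finset.prod_mul_distrib]
      refine Finset.prod_congr rfl fun l _ => ?_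
      rw [← pow_mul, ← pow_add, Nat.mul_comm, Nat.div_add_mod]
    rw [mul_assoc, hc, ← hF, ← hu, mul_comm, Units.mul_inv_cancel_right]
  · rw [natDegree_prod_of_monic _ _ (hpow_monic _), natDegree_prod_of_monic _ _ (hpow_monic _)]
    simp only [natDegree_pow]
    calc ∑ l ∈ F.toFinset, F.count l % 2 * l.natDegree
        ≤ ∑ l ∈ F.toFinset, (F.count l / 2 * l.natDegree + if l = l₀ then l₀.natDegree else 0) :=
          Finset.sum_le_sum fun l hl => by
            by_cases hl₀ : l = l₀
            · subst hl₀
              simp only [if_true]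
              simpa only [add_one_mul] using
                Nat.mul_le_mul_right l.natDegree (show F.count l % 2 ≤ F.count l / 2 + 1 by omega)
            · have := two_le_count l (Multiset.mem_toFinset.1 hl) hl₀
              simp only [hl₀, if_false, add_zero]
              exact Nat.mul_le_mul_right _ (by omega)
      _ ≤ _ := by
          rw [Finset.sum_add_distrib, Finset.sum_ite_eq']
          split_ifs <;> omega

theorem Polynomial.card_isPowerfulAwayFrom_le {K : Type*} [Field K] [Fintype K] {l₀ : K[X]}
    (hl₀ : l₀.natDegree ≤ 1) (N : ℕ) :
    Nat.card {f : K[X] // f ≠ 0 ∧ f ∈ degreeLT K N ∧ IsPowerfulAwayFrom l₀ f} ≤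
      Fintype.card K ^ (N / 2 + N / 3 + 4) := by
  let φ : K × degreeLT K (N / 2 + 1) × degreeLT K (N / 3 + 2) → K[X] :=
    fun t => C t.1 * (t.2.1 : K[X]) ^ 2 * t.2.2
  have hsub : {f : K[X] | f ≠ 0 ∧ f ∈ degreeLT K N ∧ IsPowerfulAwayFrom l₀ f} ⊆ Set.range φ := by
    rintro f ⟨hf, hfN, H⟩
    obtain ⟨c, g, h, rfl, hg, hh, hdeg⟩ := H.exists_C_mul_sq_mul hf
    have hc : c ≠ 0 := by rintro rfl; simp at hf
    have hfdeg : 2 * g.natDegree + h.natDegree < N := by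
      rw [mem_degreeLT, ← natDegree_lt_iff_degree_lt hf, mul_assoc, natDegree_C_mul hc,
        (hg.pow 2).natDegree_mul hh, natDegree_pow] at hfN
      exact hfN
    refine ⟨(c, ⟨g, ?_⟩, ⟨h, ?_⟩), rfl⟩ <;>
      rw [mem_degreeLT, ← natDegree_lt_iff_degree_lt (Monic.ne_zero ‹_›)] <;> omega
  calc _ ≤ Nat.card (Set.range φ) := Nat.card_mono (Set.finite_range φ) hsub
    _ ≤ _ := Finite.card_range_le φ
    _ = _ := by
      rw [Nat.card_prod, Nat.card_prod, card_degreeLT, card_degreeLT,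
        Nat.card_eq_fintype_card, ← pow_add, ← pow_succ']
      congr 1
      omega

theorem Polynomial.card_tuples_not_dvd_or_pow_dvd_le {K : Type*} [Field K] [Fintype K] {l₀ : K[X]}
    (hl₀ : l₀.natDegree ≤ 1) {p r : ℕ} (hp : 2 ≤ p) (i : Fin r) (N : ℕ) :
    Nat.card {g : Fin r → K[X] // g i ≠ 0 ∧ (∀ j, (g j).degree < N) ∧
        ∀ l : K[X], l.Monic → Irreducible l → l ≠ l₀ → (¬ l ∣ g i ∨ l ^ p ∣ g i)} ≤
      Fintype.card K ^ (N / 2 + N / 3 + 4) * (Fintype.card K ^ N) ^ (r - 1) := by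
  let t : Set K[X] := {f | f ≠ 0 ∧ f ∈ degreeLT K N ∧ IsPowerfulAwayFrom l₀ f}
  have : Finite (degreeLT K N : Set K[X]) := finite_degreeLT K N
  have : Finite t := Finite.Set.subset (degreeLT K N : Set K[X]) fun f hf => hf.2.1
  have hs : Nat.card (degreeLT K N : Set K[X]) = Fintype.card K ^ N := card_degreeLT K N
  have hQ : ∀ g : Fin r → K[X], (g i ≠ 0 ∧ (∀ j, (g j).degree < N) ∧
      ∀ l : K[X], l.Monic → Irreducible l → l ≠ l₀ → (¬ l ∣ g i ∨ l ^ p ∣ g i)) →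
      g i ∈ t ∧ ∀ j, g j ∈ degreeLT K N := by
    rintro g ⟨hgi, hdeg, H⟩
    refine ⟨⟨hgi, mem_degreeLT.2 (hdeg i), fun l hm hirr hl₀ hdvd => ?_⟩,
      fun j => mem_degreeLT.2 (hdeg j)⟩
    exact (pow_dvd_pow l hp).trans ((H l hm hirr hl₀).resolve_left (not_not.2 hdvd))
  calc _ ≤ _ := Nat.card_subtype_pi_le i _ t hQ
    _ ≤ _ := by
      rw [Fintype.card_fin, hs]
      exact Nat.mul_le_mul_right _ (card_isPowerfulAwayFrom_le hl₀ N)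

theorem tendsto_pow_div_pow_sub_one {x : ℝ} (hx : 2 ≤ x) :
    Tendsto (fun N : ℕ => x ^ (N / 2 + N / 3 + 4) / (x ^ N - 1)) atTop (𝓝 0) := by
  have hx1 : 1 ≤ x := by linarith
  have hbound : Tendsto (fun N : ℕ => 2 * x ^ 4 * x⁻¹ ^ (N / 6)) atTop (𝓝 0) := by
    have h6 : Tendsto (fun N : ℕ => N / 6) atTop atTop :=
      Nat.tendsto_div_const_atTop (by norm_num)
    have hinv : Tendsto (fun k : ℕ => x⁻¹ ^ k) atTop (𝓝 0) :=
      tendsto_pow_atTop_nhds_zero_of_lt_one (by positivity) (inv_lt_one_of_one_lt₀ (by linarith))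
    simpa using (hinv.comp h6).const_mul (2 * x ^ 4)
  refine squeeze_zero' (Eventually.of_forall fun N => div_nonneg (by positivity)
    (sub_nonneg.2 (one_le_pow₀ hx1))) ?_ hbound
  filter_upwards [eventually_ge_atTop 1] with N hN
  have hxN : 2 ≤ x ^ N := hx.trans (le_self_pow₀ hx1 (by omega))
  rw [div_le_iff₀ (by linarith), inv_pow, mul_assoc, mul_comm, mul_assoc,
    ← div_eq_inv_mul, le_div_iff₀ (by positivity)]
  calc x ^ (N / 2 + N / 3 + 4) * x ^ (N / 6) ≤ x ^ (N + 4) := by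
        rw [← pow_add]; exact pow_le_pow_right₀ hx1 (by omega)
    _ = x ^ 4 * x ^ N := by ring
    _ ≤ x ^ 4 * (2 * (x ^ N - 1)) := by gcongr; linarith
    _ = _ := by ring

/-- The set Ω_r of tuples (g_1,...,g_r) ∈ F_q[T]^r with g_r ≠ 0 such that
for ALL monic irreducibles l ≠ T, v_l(g_r) = 0 (l ∤ g_r) or v_l(g_r) ≥ p (l^p ∣ g_r),
has density 0: the counting ratio tends to 0. -/
theorem stmt_12 (p : ℕ) (hp : p.Prime) (q : ℕ)
    (Fq : Type) [Field Fq] [Fintype Fq] (hcard : Fintype.card Fq = q)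
    (r : ℕ) (hr : 2 ≤ r) :
    Filter.Tendsto
      (fun N : ℕ =>
        (Nat.card {g : Fin r → Polynomial Fq //
            g ⟨r - 1, by omega⟩ ≠ 0 ∧ (∀ i, (g i).degree < (N : ℕ)) ∧
            ∀ l : Polynomial Fq, l.Monic → Irreducible l → l ≠ Polynomial.X →
              (¬ l ∣ g ⟨r - 1, by omega⟩ ∨ l ^ p ∣ g ⟨r - 1, by omega⟩)} : ℝ) /
          ((q : ℝ) ^ (r * N) - (q : ℝ) ^ ((r - 1) * N)))
      Filter.atTop (nhds 0) := by
  have hq : (2 : ℝ) ≤ q := by exact_mod_cast hcard ▸ Fintype.one_lt_card (α := Fq)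
  have hden : ∀ N : ℕ, (q : ℝ) ^ (r * N) - (q : ℝ) ^ ((r - 1) * N) =
      (q : ℝ) ^ ((r - 1) * N) * ((q : ℝ) ^ N - 1) := fun N => by
    rw [mul_sub, mul_one, ← pow_add, ← Nat.succ_mul, Nat.succ_eq_add_one,
      Nat.sub_add_cancel (by omega : 1 ≤ r)]
  refine squeeze_zero (fun N => div_nonneg (Nat.cast_nonneg _) ?_) (fun N => ?_)
    (tendsto_pow_div_pow_sub_one hq)
  · rw [hden]
    exact mul_nonneg (by positivity) (sub_nonneg.2 (one_le_pow₀ (by linarith)))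
  · have hcount := card_tuples_not_dvd_or_pow_dvd_le (K := Fq) (r := r) natDegree_X_le hp.two_le ⟨r - 1, by omega⟩ N
    rw [hcard, ← pow_mul, mul_comm, mul_comm N] at hcount
    have hqN : (0 : ℝ) < (q : ℝ) ^ ((r - 1) * N) := by positivity
    calc _ = _ / ((q : ℝ) ^ ((r - 1) * N) * ((q : ℝ) ^ N - 1)) := by rw [hden]
      _ ≤ (q : ℝ) ^ ((r - 1) * N) * (q : ℝ) ^ (N / 2 + N / 3 + 4) /
          ((q : ℝ) ^ ((r - 1) * N) * ((q : ℝ) ^ N - 1)) :=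
        div_le_div_of_nonneg_right (by exact_mod_cast hcount)
          (mul_nonneg hqN.le (sub_nonneg.2 (one_le_pow₀ (by linarith))))
      _ = _ := mul_div_mul_left _ _ hqN.ne'
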